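/- Let L be an integral ℓ-monoid, let α be a fuzzy regular expression over a finite alphabet X with associated alphabet Y, let A = (A, X∪Y, δ^A, a₀, τ^A) be an arbitrary nondeterministic finite automaton recognizing ‖α_R‖, and let E be a right invariant crisp equivalence on A. Then R_{A/E}(E_a, E_b) = (R_A∘E)(a,b) for all a, b ∈ A, where R_{A/E} is the fuzzy relation constructed from the factor automaton A/E in the same way as R_A is constructed from A. -/

import Mathlib

attribute [local instance] Classical.propDecidable

/-- A lattice-ordered monoid (ℓ-monoid): a lattice with least element `⊥` and greatest
element `⊤`, together with a monoid structure (multiplication `*`, unit `1`, playing the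
role of `e`) such that `⊥` (playing the role of the scalar `0`) is absorbing and
multiplication distributes over binary joins on both sides. -/
class LMonoid (L : Type*) extends Lattice L, BoundedOrder L, Monoid L where
  mul_bot : ∀ x : L, x * ⊥ = ⊥
  bot_mul : ∀ x : L, ⊥ * x = ⊥
  mul_sup : ∀ x y z : L, x * (y ⊔ z) = x * y ⊔ x * z
  sup_mul : ∀ x y z : L, (x ⊔ y) * z = x * z ⊔ y * z

/-- An integral ℓ-monoid: the unit of the multiplication is the top element of the lattice. -/
class IntegralLMonoid (L : Type*) extends LMonoid L where
  one_eq_top : (1 : L) = ⊤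

/-- Fuzzy regular expressions over an alphabet `X` with scalars in `L`. -/
inductive FRE (X L : Type*) where
  | zero : FRE X L
  | eps : FRE X L
  | char : X → FRE X L
  | smul : L → FRE X L → FRE X L
  | plus : FRE X L → FRE X L → FRE X L
  | comp : FRE X L → FRE X L → FRE X L
  | star : FRE X L → FRE X L

/-- The set of scalars of `L` occurring in a fuzzy regular expression. -/
def FRE.scalars {X L : Type*} : FRE X L → Set L
  | .zero => ∅
  | .eps => ∅
  | .char _ => ∅
  | .smul lam β => insert lam β.scalars
  | .plus β γ => β.scalars ∪ γ.scalars
  | .comp β γ => β.scalars ∪ γ.scalars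
  | .star β => β.scalars

noncomputable section

namespace Fz

variable {L : Type*} [IntegralLMonoid L]

/-- Composition of fuzzy relations: `(R ∘ S)(a,b) = ⋁_{c} R(a,c) ⊗ S(c,b)`. -/
def fcomp {A : Type*} [Fintype A] (R S : A → A → L) : A → A → L :=
  fun a b => Finset.univ.sup fun c => R a c * S c b

/-- Composition of a fuzzy relation with a fuzzy set: `(R ∘ f)(a) = ⋁_{b} R(a,b) ⊗ f(b)`. -/
def fcompf {A : Type*} [Fintype A] (R : A → A → L) (f : A → L) : A → L :=
  fun a => Finset.univ.sup fun b => R a b * f b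

/-- Composition of a fuzzy set with a fuzzy relation: `(f ∘ R)(a) = ⋁_{b} f(b) ⊗ R(b,a)`. -/
def fcompfR {A : Type*} [Fintype A] (f : A → L) (R : A → A → L) : A → L :=
  fun a => Finset.univ.sup fun b => f b * R b a

/-- Powers of a fuzzy relation: `R⁰` is the crisp equality and `R^{k+1} = R^k ∘ R`. -/
def rpow {A : Type*} [Fintype A] (R : A → A → L) : ℕ → A → A → L
  | 0 => fun a b => if a = b then 1 else ⊥
  | k + 1 => fcomp (rpow R k) R

private def dstarAux {A Z : Type*} [Fintype A] (δ : A → Z → A → L) : A → List Z → A → L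
  | a, [], b => if a = b then 1 else ⊥
  | a, z :: w, b => Finset.univ.sup fun c => dstarAux δ a w c * δ c z b

/-- The extension of a fuzzy transition relation to words:
`δ(a, ε, b) = 1` if `a = b` and `⊥` otherwise, and
`δ(a, ux, b) = ⋁_{c} δ(a, u, c) ⊗ δ(c, x, b)`. -/
def dstar {A Z : Type*} [Fintype A] (δ : A → Z → A → L) (a : A) (w : List Z) (b : A) : L :=
  dstarAux δ a w.reverse b

/-- Fuzzy language recognized by a fuzzy automaton with a single crisp initial state `a0`:
`L(A)(u) = ⋁_{b} δ(a0, u, b) ⊗ τ(b)`. -/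
def lang {A Z : Type*} [Fintype A] (δ : A → Z → A → L) (a0 : A) (τ : A → L)
    (w : List Z) : L :=
  Finset.univ.sup fun b => dstar δ a0 w b * τ b

/-- Concatenation of fuzzy languages: `(fg)(u) = ⋁_{u = vw} f(v) ⊗ g(w)`
(a finite join over the factorizations of `u`). -/
def fconcat {X : Type*} (f g : List X → L) : List X → L :=
  fun u => (Finset.range (u.length + 1)).sup fun i => f (u.take i) * g (u.drop i)

/-- Powers of a fuzzy language: `f⁰` is the characteristic function of the empty word,
and `f^{n+1} = fⁿ f`. -/
def fpow {X : Type*} (f : List X → L) : ℕ → List X → L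
  | 0 => fun u => if u = [] then 1 else ⊥
  | n + 1 => fconcat (fpow f n) f

/-- `IsNorm α f` asserts that `f` is the fuzzy language `‖α‖` represented by the fuzzy
regular expression `α` (for the star, `‖β*‖(u)` is the least upper bound of the powers,
which is required to exist). -/
inductive IsNorm {X : Type*} : FRE X L → (List X → L) → Prop
  | zero : IsNorm .zero fun _ => ⊥
  | eps : IsNorm .eps fun u => if u = [] then 1 else ⊥
  | char (x : X) : IsNorm (.char x) fun u => if u = [x] then 1 else ⊥
  | smul (lam : L) {β : FRE X L} {f : List X → L} :
      IsNorm β f → IsNorm (.smul lam β) fun u => lam * f u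
  | plus {β γ : FRE X L} {f g : List X → L} :
      IsNorm β f → IsNorm γ g → IsNorm (.plus β γ) fun u => f u ⊔ g u
  | comp {β γ : FRE X L} {f g : List X → L} :
      IsNorm β f → IsNorm γ g → IsNorm (.comp β γ) (fconcat f g)
  | star {β : FRE X L} {f g : List X → L} :
      IsNorm β f → (∀ u, IsLUB {l | ∃ n : ℕ, l = fpow f n u} (g u)) →
      IsNorm (.star β) g

/-- The ordinary regular expression `α_R` over `X ∪ Y` obtained from a fuzzy regular
expression `α` by replacing each scalar `λ` by the associated letter `λ' = sc λ ∈ Y`. -/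
def toReg {X Y : Type*} (sc : L → Y) : FRE X L → RegularExpression (X ⊕ Y)
  | .zero => 0
  | .eps => 1
  | .char x => RegularExpression.char (Sum.inl x)
  | .smul lam β => RegularExpression.char (Sum.inr (sc lam)) * toReg sc β
  | .plus β γ => toReg sc β + toReg sc γ
  | .comp β γ => toReg sc β * toReg sc γ
  | .star β => (toReg sc β).star

/-- `U_Y(u)`: the set of words over `X ∪ Y` from which deleting all letters of `Y`
yields `u` (the shuffle of `u` with `Y*`). -/
def UY {X : Type*} (Y : Type*) (u : List X) : Set (List (X ⊕ Y)) :=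
  {v | v.filterMap (fun z => z.getLeft?) = u}

/-- The homomorphism `φ*_α : (X ∪ Y)* → (L, ⊗, 1)` determined by mapping every letter of
`X` to `1` and every letter `λ' ∈ Y` to the corresponding scalar `λ = φY λ'`. -/
def phiStar {X Y : Type*} (φY : Y → L) (v : List (X ⊕ Y)) : L :=
  (v.map (Sum.elim (fun _ => (1 : L)) φY)).prod

/-- The language `‖α_R‖` of the regular expression `α_R`, viewed as a fuzzy language
with membership values in `{0, 1} ⊆ L`. -/
def langR {X Y : Type*} (sc : L → Y) (α : FRE X L) (v : List (X ⊕ Y)) : L :=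
  if v ∈ (toReg sc α).matches' then 1 else ⊥

/-- The reflexive fuzzy relation `R` on the state set of a nondeterministic automaton over
`X ∪ Y`: `R(a,a) = 1` and, for `a ≠ b`, `R(a,b) = ⋁_{λ' ∈ Y} λ ⊗ δ(a, λ', b)`. -/
def Rstep {X Y A : Type*} [Fintype A] [Fintype Y] (φY : Y → L)
    (δ : A → X ⊕ Y → A → L) : A → A → L :=
  fun a b => if a = b then 1 else Finset.univ.sup fun y : Y => φY y * δ a (Sum.inr y) b

/-- The fuzzy relation `R_A = Rⁿ`, `n = |A|`: the least transitive fuzzy relation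
containing `R`. -/
def RA {X Y A : Type*} [Fintype A] [Fintype Y] (φY : Y → L)
    (δ : A → X ⊕ Y → A → L) : A → A → L :=
  rpow (Rstep φY δ) (Fintype.card A)

/-- The set `{φ*_α(v) ⊗ δ^A(a,v,b) : v ∈ U_Y(x)}` whose least upper bound defines the
transition `δ^{A_α}(a, x, b)` of the fuzzy automaton associated with `A` and `α`. -/
def dset {X Y A : Type*} [Fintype A] (φY : Y → L) (δ : A → X ⊕ Y → A → L)
    (a : A) (x : X) (b : A) : Set L :=
  {l | ∃ v ∈ UY Y [x], l = phiStar φY v * dstar δ a v b}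

/-- The set `{⋁_{b} φ*_α(v) ⊗ δ^A(a,v,b) ⊗ τ(b) : v ∈ Y*}` whose least upper bound defines
the terminal degree `τ^{A_α}(a)` of the fuzzy automaton associated with `A` and `α`. -/
def tset {X Y A : Type*} [Fintype A] (φY : Y → L) (δ : A → X ⊕ Y → A → L)
    (τ : A → L) (a : A) : Set L :=
  {l | ∃ w : List Y, l = Finset.univ.sup fun b =>
    phiStar φY ((w.map Sum.inr : List (X ⊕ Y))) *
      dstar δ a (w.map Sum.inr) b * τ b}


/-- The setoid on the state set induced by a crisp equivalence `E`
(`a ≈ b` iff `E(a,b) = 1`). -/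
def toSetoid {A : Type*} (E : A → A → L) (hrefl : ∀ a, E a a = 1)
    (hsymm : ∀ a b, E a b = E b a) (htrans : ∀ a b c, E a b * E b c ≤ E a c) :
    Setoid A where
  r a b := E a b = 1
  iseqv := by
    refine ⟨fun a => hrefl a, fun {a b} h => by rw [hsymm]; exact h, fun {a b c} h1 h2 => ?_⟩
    refine le_antisymm ?_ ?_
    · rw [IntegralLMonoid.one_eq_top (L := L)]; exact le_top
    · calc (1 : L) = 1 * 1 := (one_mul 1).symm
      _ = E a b * E b c := by rw [h1, h2]
      _ ≤ E a c := htrans a b c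

theorem erow {A : Type*} {E : A → A → L} (hsymm : ∀ a b, E a b = E b a)
    (htrans : ∀ a b c, E a b * E b c ≤ E a c) {a a' : A} (h : E a a' = 1) (c : A) :
    E a c = E a' c := by
  apply le_antisymm
  · have h' : E a' a = 1 := by rw [hsymm]; exact h
    calc E a c = E a' a * E a c := by rw [h', one_mul]
    _ ≤ E a' c := htrans a' a c
  · calc E a' c = E a a' * E a' c := by rw [h, one_mul]
    _ ≤ E a c := htrans a a' c

theorem sandwich_congr {A : Type*} [Fintype A] {E : A → A → L}
    (hsymm : ∀ a b, E a b = E b a) (htrans : ∀ a b c, E a b * E b c ≤ E a c)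
    (M : A → A → L) {a a' b b' : A} (ha : E a a' = 1) (hb : E b b' = 1) :
    fcomp (fcomp E M) E a b = fcomp (fcomp E M) E a' b' := by
  simp only [fcomp]
  have h1 : ∀ c, (Finset.univ.sup fun d => E a d * M d c) =
      Finset.univ.sup fun d => E a' d * M d c :=
    fun c => Finset.sup_congr rfl fun d _ => by rw [erow hsymm htrans ha d]
  have h2 : ∀ c, E c b = E c b' := fun c => by
    rw [hsymm c b, erow hsymm htrans hb c, hsymm b' c]
  exact Finset.sup_congr rfl fun c _ => by rw [h1 c, h2 c]

/-- The fuzzy transition relation of the factor automaton `A/E`: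
`δ^{A/E}(E_a, z, E_b) = (E ∘ δ_z ∘ E)(a, b)`. -/
def deltaQ {A Z : Type*} [Fintype A] (E : A → A → L) (hrefl : ∀ a, E a a = 1)
    (hsymm : ∀ a b, E a b = E b a) (htrans : ∀ a b c, E a b * E b c ≤ E a c)
    (δ : A → Z → A → L) :
    Quotient (toSetoid E hrefl hsymm htrans) → Z →
      Quotient (toSetoid E hrefl hsymm htrans) → L :=
  fun p z q =>
    Quotient.lift₂ (fun a b => fcomp (fcomp E (fun c d => δ c z d)) E a b)
      (fun _ _ _ _ ha hb => sandwich_congr hsymm htrans _ ha hb) p q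

/-- The terminal fuzzy set of the factor automaton `A/E`: `τ^{A/E}(E_a) = (τ^A ∘ E)(a)`. -/
def tauQ {A : Type*} [Fintype A] (E : A → A → L) (hrefl : ∀ a, E a a = 1)
    (hsymm : ∀ a b, E a b = E b a) (htrans : ∀ a b c, E a b * E b c ≤ E a c)
    (τ : A → L) : Quotient (toSetoid E hrefl hsymm htrans) → L :=
  Quotient.lift (fun a => fcompfR τ E a)
    (fun a a' h => by
      simp only [fcompfR]
      exact Finset.sup_congr rfl fun b _ => by
        rw [hsymm b a, erow hsymm htrans h b, hsymm a' b])

end Fz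

end


/-!
Write `R` for the one-step relation of `A` (before taking the power `|A|`). Right invariance
gives `E ∘ δ_z ∘ E = δ_z ∘ E`, so one step of `A/E` from the class of `p` to that of `q` is
`(R ∘ E)(p, q)`. The values of a crisp `E` commute with the scalars weighting the letters of `Y`,
which turns right invariance into `E ∘ R ≤ R ∘ E` and hence `E ∘ (R ∘ E) = R ∘ E`; this lets `E`
be pushed through powers, so the `k`-th power of the step relation of `A/E` is `Rᵏ ∘ E` on
representatives. The exponents `|A/E| ≤ |A|` are reconciled because the powers of a reflexive
fuzzy relation on `n` states are constant from `n` on: in an integral ℓ-monoid a path visiting a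
state twice is dominated by the path with the loop cut out.
-/

namespace LMonoid

variable {L : Type*} [LMonoid L]

instance : MulLeftMono L :=
  ⟨fun a _ _ h => sup_eq_right.mp (by rw [← LMonoid.mul_sup, sup_eq_right.mpr h])⟩

instance : MulRightMono L :=
  ⟨fun a _ _ h => sup_eq_right.mp (by
    show _ * a ⊔ _ * a = _ * a
    rw [← LMonoid.sup_mul, sup_eq_right.mpr h])⟩

theorem finsetSup_mul {ι : Type*} (s : Finset ι) (f : ι → L) (x : L) :
    s.sup f * x = s.sup fun i => f i * x :=
  Finset.apply_sup_eq_sup_comp (· * x) (fun a b => LMonoid.sup_mul a b x) (LMonoid.bot_mul x)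

theorem mul_finsetSup {ι : Type*} (s : Finset ι) (f : ι → L) (x : L) :
    x * s.sup f = s.sup fun i => x * f i :=
  Finset.apply_sup_eq_sup_comp (x * ·) (LMonoid.mul_sup x) (LMonoid.mul_bot x)

theorem commute_of_crisp {e : L} (he : e = 1 ∨ e = ⊥) (x : L) : Commute e x := by
  rcases he with rfl | rfl
  · exact Commute.one_left x
  · exact (LMonoid.bot_mul x).trans (LMonoid.mul_bot x).symm

end LMonoid

theorem IntegralLMonoid.le_one {L : Type*} [IntegralLMonoid L] (x : L) : x ≤ 1 :=
  IntegralLMonoid.one_eq_top (L := L) ▸ le_top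

noncomputable section

namespace Fz

open Finset LMonoid

section Relations

variable {L : Type*} [IntegralLMonoid L] {A : Type*} [Fintype A]

def fid : A → A → L := fun a b => if a = b then 1 else ⊥

theorem rpow_zero (R : A → A → L) : rpow R 0 = fid := rfl

theorem mul_le_fcomp (R S : A → A → L) (a c b : A) : R a c * S c b ≤ fcomp R S a b :=
  le_sup (f := fun c => R a c * S c b) (mem_univ c)

theorem fid_fcomp (R : A → A → L) : fcomp fid R = R := by
  funext a b
  refine le_antisymm (Finset.sup_le fun c _ => ?_) ?_
  · by_cases h : a = c
    · rw [fid, if_pos h, one_mul, h]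
    · rw [fid, if_neg h, LMonoid.bot_mul]; exact bot_le
  · simpa [fid] using mul_le_fcomp fid R a a b

theorem fcomp_fid (R : A → A → L) : fcomp R fid = R := by
  funext a b
  refine le_antisymm (Finset.sup_le fun c _ => ?_) ?_
  · by_cases h : c = b
    · rw [fid, if_pos h, mul_one, h]
    · rw [fid, if_neg h, LMonoid.mul_bot]; exact bot_le
  · simpa [fid] using mul_le_fcomp R fid a b b

theorem fcomp_assoc (R S T : A → A → L) : fcomp (fcomp R S) T = fcomp R (fcomp S T) := by
  funext a b
  simp only [fcomp, finsetSup_mul, mul_finsetSup, mul_assoc]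
  exact Finset.sup_comm _ _ _

theorem fcomp_mono {R R' S S' : A → A → L} (hR : R ≤ R') (hS : S ≤ S') :
    fcomp R S ≤ fcomp R' S' :=
  fun a b => sup_mono_fun fun c _ => mul_le_mul' (hR a c) (hS c b)

theorem fcomp_sup_left (R R' S : A → A → L) : fcomp (R ⊔ R') S = fcomp R S ⊔ fcomp R' S := by
  funext a b
  simp only [fcomp, Pi.sup_apply, LMonoid.sup_mul]
  exact sup_sup

theorem fcomp_sup_right (R S S' : A → A → L) : fcomp R (S ⊔ S') = fcomp R S ⊔ fcomp R S' := by
  funext a b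
  simp only [fcomp, Pi.sup_apply, LMonoid.mul_sup]
  exact sup_sup

theorem le_fcomp_left {E : A → A → L} (hrefl : ∀ a, E a a = 1) (R : A → A → L) :
    R ≤ fcomp E R :=
  fun a b => by simpa [hrefl] using mul_le_fcomp E R a a b

theorem le_fcomp_right {E : A → A → L} (hrefl : ∀ a, E a a = 1) (R : A → A → L) :
    R ≤ fcomp R E :=
  fun a b => by simpa [hrefl] using mul_le_fcomp R E a b b

def weightedSup {ι : Type*} [Fintype ι] (w : ι → L) (R : ι → A → A → L) : A → A → L :=
  fun a b => univ.sup fun i => w i * R i a b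

variable {ι : Type*} [Fintype ι] (w : ι → L)

theorem weightedSup_fcomp (R : ι → A → A → L) (S : A → A → L) :
    fcomp (weightedSup w R) S = weightedSup w fun i => fcomp (R i) S := by
  funext a b
  simp only [fcomp, weightedSup, finsetSup_mul, mul_finsetSup, mul_assoc]
  exact Finset.sup_comm _ _ _

theorem fcomp_weightedSup_of_crisp {E : A → A → L} (hcrisp : ∀ a b, E a b = 1 ∨ E a b = ⊥)
    (R : ι → A → A → L) :
    fcomp E (weightedSup w R) = weightedSup w fun i => fcomp E (R i) := by
  funext a b
  simp only [fcomp, weightedSup, mul_finsetSup]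
  rw [Finset.sup_comm]
  refine sup_congr rfl fun i _ => sup_congr rfl fun c _ => ?_
  rw [← mul_assoc, (commute_of_crisp (hcrisp a c) (w i)).eq, mul_assoc]

omit [Fintype A] in
theorem weightedSup_mono {R R' : ι → A → A → L} (h : ∀ i, R i ≤ R' i) :
    weightedSup w R ≤ weightedSup w R' :=
  fun a b => sup_mono_fun fun i _ => mul_le_mul' le_rfl (h i a b)

end Relations

section CrispEquivalence

variable {L : Type*} [IntegralLMonoid L] {A : Type*} [Fintype A] {E : A → A → L}

theorem fcomp_self_of_refl_of_trans (hrefl : ∀ a, E a a = 1)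
    (htrans : ∀ a b c, E a b * E b c ≤ E a c) : fcomp E E = E :=
  funext₂ fun a b => le_antisymm (Finset.sup_le fun c _ => htrans a c b) (le_fcomp_left hrefl E a b)

theorem fcomp_fcomp_eq_of_le (hrefl : ∀ a, E a a = 1) (htrans : ∀ a b c, E a b * E b c ≤ E a c)
    {R : A → A → L} (hR : fcomp E R ≤ fcomp R E) : fcomp E (fcomp R E) = fcomp R E := by
  refine le_antisymm ?_ (le_fcomp_left hrefl _)
  calc fcomp E (fcomp R E) = fcomp (fcomp E R) E := (fcomp_assoc E R E).symm
    _ ≤ fcomp (fcomp R E) E := fcomp_mono hR le_rfl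
    _ = fcomp R E := by rw [fcomp_assoc, fcomp_self_of_refl_of_trans hrefl htrans]

variable {X Y : Type*} [Fintype Y] (φY : Y → L) (δ : A → X ⊕ Y → A → L)

theorem Rstep_eq_fid_sup :
    Rstep φY δ = fid ⊔ weightedSup φY fun y a b => δ a (Sum.inr y) b := by
  funext a b
  simp only [Rstep, fid, Pi.sup_apply, weightedSup]
  split_ifs
  · rw [IntegralLMonoid.one_eq_top, top_sup_eq]
  · rw [bot_sup_eq]

theorem Rstep_self (a : A) : Rstep φY δ a a = 1 := if_pos rfl

theorem fcomp_Rstep_le_of_crisp (hcrisp : ∀ a b, E a b = 1 ∨ E a b = ⊥)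
    (hrinv : ∀ y, fcomp E (fun a b => δ a (Sum.inr y) b) ≤ fcomp (fun a b => δ a (Sum.inr y) b) E) :
    fcomp E (Rstep φY δ) ≤ fcomp (Rstep φY δ) E := by
  rw [Rstep_eq_fid_sup, fcomp_sup_right, fcomp_sup_left, fid_fcomp, fcomp_fid,
    fcomp_weightedSup_of_crisp _ hcrisp, weightedSup_fcomp]
  exact sup_le_sup_left (weightedSup_mono _ hrinv) E

end CrispEquivalence

section Paths

variable {L : Type*} [IntegralLMonoid L] {B : Type*} (R : B → B → L)

def pathVal : B → List B → B → L
  | a, [], b => R a b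
  | a, c :: l, b => R a c * pathVal c l b

theorem pathVal_append (a : B) (s : List B) (c : B) (t : List B) (b : B) :
    pathVal R a (s ++ c :: t) b = pathVal R a s c * pathVal R c t b := by
  induction s generalizing a with
  | nil => rfl
  | cons d s ih => simp only [List.cons_append, pathVal, ih, mul_assoc]

theorem exists_nodup_pathVal_le (a : B) (l : List B) (b : B) :
    ∃ l', (a :: l').Nodup ∧ pathVal R a l b ≤ pathVal R a l' b := by
  induction l generalizing a with
  | nil => exact ⟨[], List.nodup_singleton a, le_rfl⟩
  | cons c l ih =>
    obtain ⟨l', hnd, hle⟩ := ih c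
    have hcons : pathVal R a (c :: l) b ≤ pathVal R a (c :: l') b := mul_le_mul' le_rfl hle
    by_cases ha : a ∈ c :: l'
    · obtain ⟨s, t, hst⟩ := List.append_of_mem ha
      refine ⟨t, hnd.sublist (hst ▸ List.sublist_append_right s _), hcons.trans ?_⟩
      calc pathVal R a (c :: l') b = pathVal R a s a * pathVal R a t b := by
            rw [hst, pathVal_append]
        _ ≤ pathVal R a t b := mul_le_of_le_one_left' (IntegralLMonoid.le_one _)
    · exact ⟨c :: l', List.nodup_cons.mpr ⟨ha, hnd⟩, hcons⟩

variable [Fintype B]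

theorem rpow_one : rpow R 1 = R := fid_fcomp R

theorem pathVal_le_rpow (a : B) (l : List B) (b : B) :
    pathVal R a l b ≤ rpow R (l.length + 1) a b := by
  induction l using List.reverseRecOn generalizing b with
  | nil => show R a b ≤ rpow R 1 a b; rw [rpow_one]
  | append_singleton l c ih =>
    rw [pathVal_append, List.length_append, List.length_singleton]
    exact (mul_le_mul' (ih c) le_rfl).trans (mul_le_fcomp _ R a c b)

variable {R} (hR : ∀ b, R b b = 1)
include hR

theorem rpow_mono {j k : ℕ} (h : j ≤ k) : rpow R j ≤ rpow R k := by
  induction k, h using Nat.le_induction with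
  | base => exact le_rfl
  | succ k _ ih => exact ih.trans (le_fcomp_right hR _)

theorem pathVal_le_rpow_card (a : B) (l : List B) (b : B) :
    pathVal R a l b ≤ rpow R (Fintype.card B) a b := by
  obtain ⟨l', hnd, hle⟩ := exists_nodup_pathVal_le R a l b
  have hlen : l'.length + 1 ≤ Fintype.card B := hnd.length_le_card
  exact hle.trans ((pathVal_le_rpow R a l' b).trans (rpow_mono hR hlen a b))

omit hR in
theorem rpow_mul_pathVal_le {M : B → B → L} (hM : ∀ a l b, pathVal R a l b ≤ M a b) (k : ℕ) :
    ∀ a c l b, rpow R k a c * pathVal R c l b ≤ M a b := by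
  induction k with
  | zero =>
    intro a c l b
    by_cases h : a = c
    · rw [rpow_zero, fid, if_pos h, one_mul, h]; exact hM c l b
    · rw [rpow_zero, fid, if_neg h, LMonoid.bot_mul]; exact bot_le
  | succ k ih =>
    intro a c l b
    rw [rpow, fcomp, finsetSup_mul]
    exact Finset.sup_le fun d _ => (mul_assoc _ _ _).trans_le (ih a d (c :: l) b)

theorem rpow_le_rpow_card (k : ℕ) : rpow R k ≤ rpow R (Fintype.card B) :=
  fun a b => by
    simpa [pathVal, hR] using rpow_mul_pathVal_le (pathVal_le_rpow_card hR) k a b [] b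

theorem rpow_eq_rpow_card {k : ℕ} (hk : Fintype.card B ≤ k) :
    rpow R k = rpow R (Fintype.card B) :=
  le_antisymm (rpow_le_rpow_card hR k) (rpow_mono hR hk)

end Paths

section Quotient

variable {L : Type*} [IntegralLMonoid L] {A : Type*}

variable {E : A → A → L} (hrefl : ∀ a, E a a = 1) (hsymm : ∀ a b, E a b = E b a)
  (htrans : ∀ a b c, E a b * E b c ≤ E a c)

theorem fid_mk_of_crisp (hcrisp : ∀ a b, E a b = 1 ∨ E a b = ⊥) (p q : A) :
    fid (Quotient.mk (toSetoid E hrefl hsymm htrans) p)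
      (Quotient.mk (toSetoid E hrefl hsymm htrans) q) = E p q := by
  by_cases h : E p q = 1
  · rw [fid, if_pos (Quotient.sound h), h]
  · rw [fid, if_neg fun h' => h (Quotient.exact h'), (hcrisp p q).resolve_left h]

variable [Fintype A]

theorem sup_univ_quotient (s : Setoid A) [Fintype (Quotient s)] (f : Quotient s → L) :
    univ.sup f = univ.sup fun a => f (Quotient.mk s a) := by
  rw [← image_univ_of_surjective Quotient.mk_surjective, sup_image]
  rfl

theorem rpow_mk_eq_fcomp (s : Setoid A) [Fintype (Quotient s)] {E R : A → A → L}
    {RQ : Quotient s → Quotient s → L}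
    (hE : ∀ p q, fid (Quotient.mk s p) (Quotient.mk s q) = E p q)
    (hRQ : ∀ p q, RQ (Quotient.mk s p) (Quotient.mk s q) = fcomp R E p q)
    (hERE : fcomp E (fcomp R E) = fcomp R E) (k : ℕ) (p q : A) :
    rpow RQ k (Quotient.mk s p) (Quotient.mk s q) = fcomp (rpow R k) E p q := by
  induction k generalizing q with
  | zero => exact (hE p q).trans (congrFun₂ (fid_fcomp E) p q).symm
  | succ k ih =>
    calc rpow RQ (k + 1) (Quotient.mk s p) (Quotient.mk s q)
        = univ.sup fun c => fcomp (rpow R k) E p c * fcomp R E c q := by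
          rw [rpow, fcomp, sup_univ_quotient]
          simp only [ih, hRQ]
      _ = fcomp (rpow R k) (fcomp E (fcomp R E)) p q := by rw [← fcomp_assoc]; rfl
      _ = fcomp (rpow R (k + 1)) E p q := by rw [hERE, ← fcomp_assoc]; rfl

variable {Z : Type*} {δ : A → Z → A → L}
  (hrinv : ∀ z, fcomp E (fun a b => δ a z b) ≤ fcomp (fun a b => δ a z b) E)

include hrinv in
theorem deltaQ_mk (z : Z) (p q : A) :
    deltaQ E hrefl hsymm htrans δ (Quotient.mk _ p) z (Quotient.mk _ q) =
      fcomp (fun a b => δ a z b) E p q := by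
  show fcomp (fcomp E _) E p q = _
  rw [fcomp_assoc, fcomp_fcomp_eq_of_le hrefl htrans (hrinv z)]

end Quotient

theorem Rstep_deltaQ_mk {L X Y A : Type*} [IntegralLMonoid L] [Fintype Y] [Fintype A]
    (φY : Y → L) {δ : A → X ⊕ Y → A → L} {E : A → A → L}
    (hcrisp : ∀ a b, E a b = 1 ∨ E a b = ⊥) (hrefl : ∀ a, E a a = 1)
    (hsymm : ∀ a b, E a b = E b a) (htrans : ∀ a b c, E a b * E b c ≤ E a c)
    (hrinv : ∀ z, fcomp E (fun a b => δ a z b) ≤ fcomp (fun a b => δ a z b) E) (p q : A) :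
    Rstep φY (deltaQ E hrefl hsymm htrans δ) (Quotient.mk _ p) (Quotient.mk _ q) =
      fcomp (Rstep φY δ) E p q := by
  rw [Rstep_eq_fid_sup, Rstep_eq_fid_sup, fcomp_sup_left, fid_fcomp, weightedSup_fcomp]
  simp only [Pi.sup_apply, weightedSup, deltaQ_mk hrefl hsymm htrans hrinv,
    fid_mk_of_crisp hrefl hsymm htrans hcrisp]

end Fz

end

open Fz in
theorem stmt16_general {L X Y A : Type*} [IntegralLMonoid L] [Fintype Y] [Fintype A]
    (φY : Y → L)
    (δ : A → X ⊕ Y → A → L)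
    (E : A → A → L)
    (hcrisp : ∀ a b, E a b = 1 ∨ E a b = ⊥)
    (hrefl : ∀ a, E a a = 1) (hsymm : ∀ a b, E a b = E b a)
    (htrans : ∀ a b c, E a b * E b c ≤ E a c)
    (hrinv : ∀ (z : X ⊕ Y) (a b : A),
      fcomp E (fun p q => δ p z q) a b ≤ fcomp (fun p q => δ p z q) E a b) :
    ∀ a b : A,
      RA φY (deltaQ E hrefl hsymm htrans δ)
          (Quotient.mk (toSetoid E hrefl hsymm htrans) a)
          (Quotient.mk (toSetoid E hrefl hsymm htrans) b) =
        fcomp (RA φY δ) E a b := by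
  intro a b
  have hinv : ∀ z, fcomp E (fun p q => δ p z q) ≤ fcomp (fun p q => δ p z q) E := hrinv
  have hcard : Fintype.card (Quotient (toSetoid E hrefl hsymm htrans)) ≤ Fintype.card A :=
    Fintype.card_le_of_surjective _ Quotient.mk_surjective
  have hERE : fcomp E (fcomp (Rstep φY δ) E) = fcomp (Rstep φY δ) E :=
    fcomp_fcomp_eq_of_le hrefl htrans (fcomp_Rstep_le_of_crisp φY δ hcrisp fun y => hinv _)
  rw [RA, ← rpow_eq_rpow_card (Rstep_self φY _) hcard]
  exact rpow_mk_eq_fcomp _ (fid_mk_of_crisp hrefl hsymm htrans hcrisp)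
    (Rstep_deltaQ_mk φY hcrisp hrefl hsymm htrans hinv) hERE _ a b

open Fz in
/-- **Proposition 2(b) of the paper.** Let `L` be an integral ℓ-monoid,
`α` a fuzzy regular expression over a finite alphabet `X` with associated alphabet `Y`,
`A = (A, X∪Y, δ, a₀, τ)` an arbitrary nondeterministic finite automaton recognizing
`‖α_R‖`, and `E` a right invariant crisp equivalence on `A`.  Then
`R_{A/E}(E_a, E_b) = (R_A ∘ E)(a, b)` for all `a, b ∈ A`, where `R_{A/E}` is constructed
from the factor automaton `A/E` in the same way as `R_A` is constructed from `A`. -/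
theorem stmt16 {L X Y A : Type*} [IntegralLMonoid L] [Fintype X] [Fintype Y] [Fintype A]
    (α : FRE X L) (sc : L → Y) (φY : Y → L)
    (hsc : Set.BijOn sc α.scalars (Set.univ : Set Y))
    (hφY : ∀ l ∈ α.scalars, φY (sc l) = l)
    (δ : A → X ⊕ Y → A → L) (a0 : A) (τ : A → L)
    (hδ : ∀ a z b, δ a z b = 1 ∨ δ a z b = ⊥)
    (hτ : ∀ a, τ a = 1 ∨ τ a = ⊥)
    (hrec : ∀ v : List (X ⊕ Y), lang δ a0 τ v = langR sc α v)
    (E : A → A → L)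
    (hcrisp : ∀ a b, E a b = 1 ∨ E a b = ⊥)
    (hrefl : ∀ a, E a a = 1) (hsymm : ∀ a b, E a b = E b a)
    (htrans : ∀ a b c, E a b * E b c ≤ E a c)
    (hrinv : ∀ (z : X ⊕ Y) (a b : A),
      fcomp E (fun p q => δ p z q) a b ≤ fcomp (fun p q => δ p z q) E a b)
    (hτinv : ∀ a, fcompf E τ a = τ a) :
    ∀ a b : A,
      RA φY (deltaQ E hrefl hsymm htrans δ)
          (Quotient.mk (toSetoid E hrefl hsymm htrans) a)
          (Quotient.mk (toSetoid E hrefl hsymm htrans) b) =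
        fcomp (RA φY δ) E a b :=
  stmt16_general φY δ E hcrisp hrefl hsymm htrans hrinv
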